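/- If sequences (y_n) and (z_n) in DL_d(q) define horofunctions h_y and h_z (as pointwise limits of d(·_n, z) − d(·_n, id)), and there exists an index i with lim_n m_i(y_n) ≠ lim_n m_i(z_n) (as elements of ℤ_{≥0} ∪ {∞}), then h_y ≠ h_z. -/

import Mathlib

open Finset

/-- A vertex of the oriented (q+1)-valent tree `T` underlying Diestel–Leader graphs:
descend `m` edges from the basepoint `o` along its ancestor ray (whose edges all
carry the label `0`), then ascend along the edge labels listed in `w`.
The normalization condition (if `m ≠ 0`, the first label of `w` is not `0`)
makes this representation unique. -/
structure TreeVertex (q : ℕ) where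
  m : ℕ
  w : List (Fin q)
  norm : ∀ a t, m ≠ 0 → w = a :: t → (a : ℕ) ≠ 0

namespace TreeVertex

variable {q : ℕ}

/-- the basepoint `o` of the tree -/
def o (q : ℕ) : TreeVertex q := ⟨0, [], fun _ _ h _ => absurd rfl h⟩

/-- `l v = d(v, o ⋏ v)` -/
def l (v : TreeVertex q) : ℕ := v.w.length

/-- the height function `h = l - m` -/
def h (v : TreeVertex q) : ℤ := (v.l : ℤ) - (v.m : ℤ)

/-- length of the longest common prefix of two lists -/
def cpl : List (Fin q) → List (Fin q) → ℕ
  | a :: s, b :: t => if a = b then cpl s t + 1 else 0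
  | _, _ => 0

/-- `mPair x y = d(x, x ⋏ y)`, the distance from `x` to the greatest common
ancestor of `x` and `y`. -/
def mPair (x y : TreeVertex q) : ℕ :=
  if x.m < y.m then x.l + (y.m - x.m)
  else if y.m < x.m then x.l
  else x.l - cpl x.w y.w

/-- the graph distance in the tree -/
def dist (x y : TreeVertex q) : ℕ := mPair x y + mPair y x

end TreeVertex

/-- The Diestel–Leader graph `DL_d(q)`: `d`-tuples of tree vertices whose heights
sum to `0`. -/
structure DL (d q : ℕ) where
  t : Fin d → TreeVertex q
  hsum : ∑ i, (t i).h = 0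

namespace DL

variable {d q : ℕ}

/-- the basepoint `id` of `DL_d(q)` -/
def id0 (d q : ℕ) : DL d q :=
  ⟨fun _ => TreeVertex.o q, by simp [TreeVertex.h, TreeVertex.o, TreeVertex.l]⟩

/-- the pairwise coordinate `m_i(x,y) = d_i(p_i x, p_i x ⋏ p_i y)` -/
def mm (x y : DL d q) (i : Fin d) : ℕ := TreeVertex.mPair (x.t i) (y.t i)

/-- the pairwise coordinate `l_i(x,y) = d_i(p_i y, p_i x ⋏ p_i y)` -/
def ll (x y : DL d q) (i : Fin d) : ℕ := TreeVertex.mPair (y.t i) (x.t i)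

/-- the coordinate `m_i(x)` -/
def mc (x : DL d q) (i : Fin d) : ℕ := (x.t i).m

/-- the coordinate `l_i(x)` -/
def lc (x : DL d q) (i : Fin d) : ℕ := (x.t i).l

/-- the height coordinate `h_i(x) = l_i(x) - m_i(x)` -/
def hc (x : DL d q) (i : Fin d) : ℤ := (x.t i).h

/-- The Stein–Taback quantity `f_{σ,i}` (here `i` is 1-based, `2 ≤ i ≤ d`):
`f_{σ,i} = m_{σ(1)} + ⋯ + m_{σ(i)} + l_{σ(i)} + ⋯ + l_{σ(d)}` for `2 ≤ i ≤ d-1`,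
and `f_{σ,d} = 2m_{σ(1)} + m_{σ(2)} + ⋯ + m_{σ(d)} + l_{σ(d)}`. -/
def fST {d : ℕ} (m l : Fin d → ℕ) (σ : Equiv.Perm (Fin d)) (i : ℕ) : ℕ :=
  if i = d then
    (∑ j, m (σ j)) + (∑ j ∈ univ.filter fun j : Fin d => (j : ℕ) = 0, m (σ j))
      + (∑ j ∈ univ.filter fun j : Fin d => (j : ℕ) = d - 1, l (σ j))
  else
    (∑ j ∈ univ.filter fun j : Fin d => (j : ℕ) + 1 ≤ i, m (σ j))
      + (∑ j ∈ univ.filter fun j : Fin d => i ≤ (j : ℕ) + 1, l (σ j))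

/-- The distance on `DL_d(q)`, via the Stein–Taback formula
`d(x,y) = min_{σ ∈ Σ_d} max_{2 ≤ i ≤ d} f_{σ,i}(x,y)`. -/
noncomputable def dist (x y : DL d q) : ℕ :=
  ⨅ σ : Equiv.Perm (Fin d), ⨆ i ∈ Finset.Icc 2 d, fST (mm x y) (ll x y) σ i

end DL

open Filter

/-!
Let `K = lim m_i(y_n) < lim m_i(z_n)` and test both horofunctions at `ζ = ζ^i_{K+1}`. Passing
from `id` to `ζ` changes the pairwise coordinates `m_j(x, ·)`, `l_j(x, ·)` only for `j = i`: both
weakly decrease when `m_i(x) > K`, and both strictly increase when `m_i(x) ≤ K`. The Stein–Taback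
formula is monotone in these coordinates, and every `f_{σ,j}` contains `m_i` or `l_i`; hence for
large `n`, `d(z_n, ζ) ≤ d(z_n, id)` and `d(y_n, ζ) ≥ d(y_n, id) + 1`, so `h_z(ζ) ≤ 0 < 1 ≤ h_y(ζ)`.
-/

theorem Finset.biSup_eq_sup {ι α : Type*} [ConditionallyCompleteLinearOrderBot α]
    (s : Finset ι) (f : ι → α) : ⨆ j ∈ s, f j = s.sup f := by
  have hle : ∀ j, ⨆ (_ : j ∈ s), f j ≤ s.sup f := fun j => ciSup_le' fun hj => le_sup hj
  refine le_antisymm (ciSup_le' hle) (Finset.sup_le fun j hj => ?_)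
  exact le_ciSup_of_le ⟨_, Set.forall_mem_range.2 hle⟩ j
    (le_ciSup_of_le (Finite.bddAbove_range _) hj le_rfl)

namespace TreeVertex

variable {q : ℕ} {a v : TreeVertex q}

theorem mPair_o_right (a : TreeVertex q) : mPair a (o q) = a.l := by
  cases h : a.w <;> simp [mPair, o, l, cpl, h]

theorem mPair_o_left (a : TreeVertex q) : mPair (o q) a = a.m := by
  cases h : a.w <;> simp [mPair, o, l, cpl] <;> omega

theorem l_lt_mPair_of_m_lt (h : a.m < v.m) : a.l < mPair a v := by
  rw [mPair, if_pos h]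
  omega

theorem mPair_le_l_of_m_le (h : v.m ≤ a.m) : mPair a v ≤ a.l := by
  unfold mPair
  split_ifs <;> omega

theorem m_lt_mPair_of_m_lt (hv : v.h = 0) (h : a.m < v.m) : a.m < mPair v a := by
  unfold TreeVertex.h at hv
  unfold mPair
  split_ifs <;> omega

theorem mPair_le_m_of_m_le (hv : v.h = 0) (h : v.m ≤ a.m) : mPair v a ≤ a.m := by
  unfold TreeVertex.h at hv
  unfold mPair
  split_ifs <;> omega

def zeta (hq : 2 ≤ q) (k : ℕ) : TreeVertex q where
  m := k
  w := List.replicate k ⟨1, hq⟩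
  norm a _ _ hw := by
    have ha : a ∈ List.replicate k (⟨1, hq⟩ : Fin q) := hw ▸ List.mem_cons_self
    simp [List.eq_of_mem_replicate ha]

theorem zeta_h (hq : 2 ≤ q) (k : ℕ) : (zeta hq k).h = 0 := by
  simp [h, l, zeta]

end TreeVertex

namespace DL

variable {d q : ℕ}

theorem fST_mono {m m' l l' : Fin d → ℕ} (hm : m ≤ m') (hl : l ≤ l')
    (σ : Equiv.Perm (Fin d)) (j : ℕ) : fST m l σ j ≤ fST m' l' σ j := by
  unfold fST
  split_ifs <;> gcongr <;> apply_assumption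

theorem fST_lt_fST {m m' l l' : Fin d → ℕ} (hm : m ≤ m') (hl : l ≤ l') (i : Fin d)
    (hmi : m i < m' i) (hli : l i < l' i) (σ : Equiv.Perm (Fin d)) (j : ℕ) :
    fST m l σ j < fST m' l' σ j := by
  have sum_le {f f' : Fin d → ℕ} (hf : f ≤ f') (S : Finset (Fin d)) :
      ∑ t ∈ S, f (σ t) ≤ ∑ t ∈ S, f' (σ t) :=
    sum_le_sum fun t _ => hf _
  have sum_lt {f f' : Fin d → ℕ} (hf : f ≤ f') (hfi : f i < f' i) {S : Finset (Fin d)}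
      (hS : σ.symm i ∈ S) : ∑ t ∈ S, f (σ t) < ∑ t ∈ S, f' (σ t) :=
    sum_lt_sum (fun t _ => hf _) ⟨_, hS, by simpa using hfi⟩
  unfold fST
  split_ifs
  · exact add_lt_add_of_lt_of_le
      (add_lt_add_of_lt_of_le (sum_lt hm hmi (mem_univ _)) (sum_le hm _)) (sum_le hl _)
  · rcases le_total ((σ.symm i : ℕ) + 1) j with h | h
    · exact add_lt_add_of_lt_of_le (sum_lt hm hmi (by simpa using h)) (sum_le hl _)
    · exact add_lt_add_of_le_of_lt (sum_le hm _) (sum_lt hl hli (by simpa using h))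

theorem dist_eq_iInf_sup (x y : DL d q) :
    dist x y = ⨅ σ : Equiv.Perm (Fin d), (Icc 2 d).sup (fST (mm x y) (ll x y) σ) :=
  iInf_congr fun _ => Finset.biSup_eq_sup _ _

theorem dist_mono {x y y' : DL d q} (hm : mm x y ≤ mm x y') (hl : ll x y ≤ ll x y') :
    dist x y ≤ dist x y' := by
  rw [dist_eq_iInf_sup, dist_eq_iInf_sup]
  exact ciInf_mono (OrderBot.bddBelow _) fun σ => sup_mono_fun fun j _ => fST_mono hm hl σ j

theorem dist_lt_dist (hd : 2 ≤ d) {x y y' : DL d q} (hm : mm x y ≤ mm x y')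
    (hl : ll x y ≤ ll x y') (i : Fin d) (hmi : mm x y i < mm x y' i)
    (hli : ll x y i < ll x y' i) : dist x y < dist x y' := by
  rw [dist_eq_iInf_sup, dist_eq_iInf_sup]
  refine Nat.lt_of_succ_le (le_ciInf fun σ => ?_)
  obtain ⟨j, hj, hsup⟩ := exists_mem_eq_sup _ ⟨2, mem_Icc.2 ⟨le_rfl, hd⟩⟩ (fST (mm x y) (ll x y) σ)
  calc (⨅ τ : Equiv.Perm (Fin d), (Icc 2 d).sup (fST (mm x y) (ll x y) τ)) + 1
      ≤ fST (mm x y) (ll x y) σ j + 1 := by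
        rw [← hsup]; exact Nat.add_le_add_right (ciInf_le (OrderBot.bddBelow _) σ) 1
    _ ≤ (Icc 2 d).sup (fST (mm x y') (ll x y') σ) :=
        (fST_lt_fST hm hl i hmi hli σ j).trans_le (le_sup hj)

def single (i : Fin d) (v : TreeVertex q) (hv : v.h = 0) : DL d q where
  t := Function.update (id0 d q).t i v
  hsum := by
    rw [sum_eq_single i (fun t _ ht => by simp [ht, id0, TreeVertex.h, TreeVertex.o, TreeVertex.l])
      (by simp)]
    simpa using hv

section single

variable {i : Fin d} {v : TreeVertex q} (x : DL d q)

theorem dist_single_le_dist_id0 (hv : v.h = 0) (h : v.m ≤ x.mc i) :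
    dist x (single i v hv) ≤ dist x (id0 d q) := by
  refine dist_mono (fun t => ?_) (fun t => ?_) <;> rcases eq_or_ne t i with rfl | ht
  · simpa [mm, single, id0, TreeVertex.mPair_o_right] using TreeVertex.mPair_le_l_of_m_le h
  · simp [mm, single, ht]
  · simpa [ll, single, id0, TreeVertex.mPair_o_left] using TreeVertex.mPair_le_m_of_m_le hv h
  · simp [ll, single, ht]

theorem dist_id0_lt_dist_single (hd : 2 ≤ d) (hv : v.h = 0) (h : x.mc i < v.m) :
    dist x (id0 d q) < dist x (single i v hv) := by
  have hmi : mm x (id0 d q) i < mm x (single i v hv) i := by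
    simpa [mm, single, id0, TreeVertex.mPair_o_right] using TreeVertex.l_lt_mPair_of_m_lt h
  have hli : ll x (id0 d q) i < ll x (single i v hv) i := by
    simpa [ll, single, id0, TreeVertex.mPair_o_left] using TreeVertex.m_lt_mPair_of_m_lt hv h
  refine dist_lt_dist hd (fun t => ?_) (fun t => ?_) i hmi hli <;>
    rcases eq_or_ne t i with rfl | ht
  · exact hmi.le
  · simp [mm, single, ht]
  · exact hli.le
  · simp [ll, single, ht]

end single

/-- The test point `ζ^i_k` of the paper: `m_i = l_i = k`, trivial in the other trees. -/
def zeta (hq : 2 ≤ q) (i : Fin d) (k : ℕ) : DL d q :=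
  single i (TreeVertex.zeta hq k) (TreeVertex.zeta_h hq k)

theorem horofn_ne_of_mc_lim_lt (hd : 2 ≤ d) (hq : 2 ≤ q) (y z : ℕ → DL d q)
    (hy hz : DL d q → ℤ)
    (hyconv : ∀ w, Tendsto (fun n => (dist (y n) w : ℤ) - (dist (y n) (id0 d q) : ℤ))
      atTop (nhds (hy w)))
    (hzconv : ∀ w, Tendsto (fun n => (dist (z n) w : ℤ) - (dist (z n) (id0 d q) : ℤ))
      atTop (nhds (hz w)))
    (i : Fin d) {Ly Lz : ℕ∞}
    (hLy : Tendsto (fun n => (mc (y n) i : ℕ∞)) atTop (nhds Ly))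
    (hLz : Tendsto (fun n => (mc (z n) i : ℕ∞)) atTop (nhds Lz))
    (hlt : Ly < Lz) : hy ≠ hz := by
  lift Ly to ℕ using hlt.ne_top with K
  have hyw : 1 ≤ hy (zeta hq i (K + 1)) := by
    refine ge_of_tendsto (hyconv _) ?_
    filter_upwards [hLy.eventually_lt_const (ENat.natCast_lt_natCast.2 K.lt_succ_self)] with n hn
    have := dist_id0_lt_dist_single (y n) hd (TreeVertex.zeta_h hq (K + 1))
      (by exact_mod_cast hn)
    unfold zeta
    omega
  have hzw : hz (zeta hq i (K + 1)) ≤ 0 := by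
    refine le_of_tendsto (hzconv _) ?_
    filter_upwards [hLz.eventually_const_lt hlt] with n hn
    have := dist_single_le_dist_id0 (z n) (TreeVertex.zeta_h hq (K + 1))
      (Nat.succ_le_of_lt (by exact_mod_cast hn))
    unfold zeta
    omega
  intro h
  rw [h] at hyw
  omega

end DL

theorem horofns_ne_of_mcoord_lim_ne_general {d q : ℕ} (hd : 2 ≤ d) (hq : 2 ≤ q)
    (y z : ℕ → DL d q) (hy hz : DL d q → ℤ)
    (hyconv : ∀ w, Tendsto (fun n => (DL.dist (y n) w : ℤ) - (DL.dist (y n) (DL.id0 d q) : ℤ))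
      atTop (nhds (hy w)))
    (hzconv : ∀ w, Tendsto (fun n => (DL.dist (z n) w : ℤ) - (DL.dist (z n) (DL.id0 d q) : ℤ))
      atTop (nhds (hz w)))
    (i : Fin d) (Ly Lz : ℕ∞)
    (hLy : Tendsto (fun n => (DL.mc (y n) i : ℕ∞)) atTop (nhds Ly))
    (hLz : Tendsto (fun n => (DL.mc (z n) i : ℕ∞)) atTop (nhds Lz))
    (hne : Ly ≠ Lz) :
    hy ≠ hz := by
  rcases hne.lt_or_gt with h | h
  · exact DL.horofn_ne_of_mc_lim_lt hd hq y z hy hz hyconv hzconv i hLy hLz h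
  · exact (DL.horofn_ne_of_mc_lim_lt hd hq z y hz hy hzconv hyconv i hLz hLy h).symm

/-- **$m_i$-invariance.** If sequences `(y n)` and `(z n)` in
`DL_d(q)` define horofunctions `hy` and `hz` (as pointwise limits of
`d(·_n, w) - d(·_n, id)`, not realized by points of the graph), and there is an
index `i` with `lim_n m_i(y n) ≠ lim_n m_i(z n)` (as elements of
`ℤ_{≥0} ∪ {∞} = ℕ∞`), then `hy ≠ hz`. -/
theorem horofns_ne_of_mcoord_lim_ne {d q : ℕ} (hd : 2 ≤ d) (hq : 2 ≤ q)
    (y z : ℕ → DL d q) (hy hz : DL d q → ℤ)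
    (hyconv : ∀ w, Tendsto (fun n => (DL.dist (y n) w : ℤ) - (DL.dist (y n) (DL.id0 d q) : ℤ))
      atTop (nhds (hy w)))
    (hzconv : ∀ w, Tendsto (fun n => (DL.dist (z n) w : ℤ) - (DL.dist (z n) (DL.id0 d q) : ℤ))
      atTop (nhds (hz w)))
    (hyhoro : ∀ v : DL d q, hy ≠ fun w => (DL.dist v w : ℤ) - (DL.dist v (DL.id0 d q) : ℤ))
    (hzhoro : ∀ v : DL d q, hz ≠ fun w => (DL.dist v w : ℤ) - (DL.dist v (DL.id0 d q) : ℤ))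
    (i : Fin d) (Ly Lz : ℕ∞)
    (hLy : Tendsto (fun n => (DL.mc (y n) i : ℕ∞)) atTop (nhds Ly))
    (hLz : Tendsto (fun n => (DL.mc (z n) i : ℕ∞)) atTop (nhds Lz))
    (hne : Ly ≠ Lz) :
    hy ≠ hz :=
  horofns_ne_of_mcoord_lim_ne_general hd hq y z hy hz hyconv hzconv i Ly Lz hLy hLz hne
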